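/- Let G be a connected graph containing a universal vertex and let k be a positive integer. Then G has a connected safe set of size at most k if and only if there exists a set S ⊆ V(G) with |S| ≤ k such that every connected component of G − S has at most k vertices. -/

import Mathlib

namespace VI

open SimpleGraph

variable {V : Type*}

/-- Total weight of a set of vertices. -/
noncomputable def setWeight (w : V → ℕ) (X : Set V) : ℕ := ∑ᶠ v ∈ X, w v

/-- Maximum weight of a connected component of `G − S`. -/
noncomputable def compMax (G : SimpleGraph V) (w : V → ℕ) (S : Set V) : ℕ :=
  sSup {n | ∃ C : (G.induce Sᶜ).ConnectedComponent, n = setWeight w (Subtype.val '' C.supp)}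

/-- `w(S) + max_{C ∈ cc(G−S)} w(V(C))`. -/
noncomputable def viCost (G : SimpleGraph V) (w : V → ℕ) (S : Set V) : ℕ :=
  setWeight w S + compMax G w S

/-- The weighted vertex integrity of `G`. -/
noncomputable def wvi (G : SimpleGraph V) (w : V → ℕ) : ℕ := ⨅ S : Set V, viCost G w S

/-- Maximum number of vertices of a connected component of `G − S`. -/
noncomputable def uCompMax (G : SimpleGraph V) (S : Set V) : ℕ :=
  sSup {n | ∃ C : (G.induce Sᶜ).ConnectedComponent, n = C.supp.ncard}

/-- `|S| + max_{C ∈ cc(G−S)} |V(C)|`. -/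
noncomputable def uViCost (G : SimpleGraph V) (S : Set V) : ℕ := S.ncard + uCompMax G S

/-- The (unweighted) vertex integrity of `G`. -/
noncomputable def uvi (G : SimpleGraph V) : ℕ := ⨅ S : Set V, uViCost G S

/-- A vertex `v` is redundant w.r.t. `S` if at most one connected component of `G − S`
contains a neighbor of `v`. -/
def Redundant (G : SimpleGraph V) (S : Set V) (v : V) : Prop :=
  {C : (G.induce Sᶜ).ConnectedComponent | ∃ u : (Sᶜ : Set V), G.Adj v ↑u ∧ u ∈ C.supp}.Subsingleton

/-- `S` is irredundant if it contains no redundant vertex. -/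
def Irredundant (G : SimpleGraph V) (S : Set V) : Prop := ∀ v ∈ S, ¬ Redundant G S v

end VI

namespace VI

/-- A connected safe set of `G`: `G[S]` is connected and no component of `G − S`
is larger than `S`. -/
def IsConnectedSafeSet {V : Type*} (G : SimpleGraph V) (S : Set V) : Prop :=
  (G.induce S).Connected ∧
    ∀ C : (G.induce Sᶜ).ConnectedComponent, C.supp.ncard ≤ S.ncard

end VI

/-!
A vertex set containing the universal vertex `u` always induces a connected subgraph, so only the
size conditions matter. Given `S` with `|S| ≤ k` and all components of `G − S` of size at most `k`:
if `u ∈ S`, enlarge `S` to exactly `k` vertices, which only shrinks the components; if `u ∉ S`, then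
`G − S` is connected, so `|V ∖ S| ≤ k`, and `V ∖ S` plays the role of `S`. Enlarging to `min k |V|`
vertices rather than `k` handles graphs with fewer than `k` vertices.
-/

theorem Set.exists_superset_ncard_eq {α : Type*} [Finite α] {s : Set α} {n : ℕ}
    (hs : s.ncard ≤ n) (hn : n ≤ Nat.card α) : ∃ t, s ⊆ t ∧ t.ncard = n := by
  obtain ⟨t, hst, -, ht⟩ := Set.exists_superset_subset_encard_eq (Set.subset_univ s) (k := n)
    (by rwa [← s.toFinite.cast_ncard_eq, Nat.cast_le])
    (by rwa [Set.encard_univ, ENat.card_eq_coe_natCard, Nat.cast_le])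
  exact ⟨t, hst, by rw [← Nat.cast_inj (R := ℕ∞), t.toFinite.cast_ncard_eq, ht]⟩

namespace SimpleGraph

variable {V W : Type*} {G : SimpleGraph V}

theorem Connected.supp_eq_univ (hG : G.Connected) (C : G.ConnectedComponent) :
    C.supp = Set.univ :=
  have := hG.preconnected.subsingleton_connectedComponent
  Set.eq_univ_of_forall fun v => (C.mem_supp_iff v).2 (Subsingleton.elim _ _)

theorem induce_connected_of_forall_adj {u : V} (hu : ∀ v, v ≠ u → G.Adj u v) {s : Set V}
    (hus : u ∈ s) : (G.induce s).Connected := by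
  refine (connected_iff_exists_forall_reachable _).2 ⟨⟨u, hus⟩, fun v => ?_⟩
  by_cases hvu : (v : V) = u
  · exact (Subtype.ext hvu : v = ⟨u, hus⟩) ▸ Reachable.refl _
  · exact Adj.reachable (G := G.induce s) (hu v hvu)

namespace ConnectedComponent

theorem ncard_supp_induce_le [Finite V] {s : Set V} (C : (G.induce s).ConnectedComponent) :
    C.supp.ncard ≤ s.ncard :=
  (Set.ncard_le_card C.supp).trans_eq (Nat.card_coe_set_eq s)

theorem ncard_supp_le_ncard_supp_map [Finite W] {G' : SimpleGraph W} (φ : G →g G')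
    (hφ : Function.Injective φ) (C : G.ConnectedComponent) :
    C.supp.ncard ≤ (C.map φ).supp.ncard := by
  have hsub : φ '' C.supp ⊆ (C.map φ).supp := by
    rintro _ ⟨v, hv, rfl⟩
    rw [mem_supp_iff] at hv ⊢
    rw [← hv, map_mk]
  rw [← Set.ncard_image_of_injective _ hφ]
  exact Set.ncard_le_ncard hsub

end ConnectedComponent

end SimpleGraph

namespace VI

open SimpleGraph

theorem exists_isConnectedSafeSet_of_mem_of_forall_adj {V : Type*} [Finite V]
    {G : SimpleGraph V} {u : V} (hu : ∀ v, v ≠ u → G.Adj u v) {k : ℕ} {R : Set V} (huR : u ∈ R)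
    (hRk : R.ncard ≤ k) (hcomp : ∀ C : (G.induce Rᶜ).ConnectedComponent, C.supp.ncard ≤ k) :
    ∃ T : Set V, IsConnectedSafeSet G T ∧ T.ncard ≤ k := by
  obtain ⟨T, hRT, hT⟩ := Set.exists_superset_ncard_eq (n := min k (Nat.card V))
    (le_min hRk (Set.ncard_le_card R)) (min_le_right _ _)
  refine ⟨T, ⟨induce_connected_of_forall_adj hu (hRT huR), fun C => ?_⟩, hT ▸ min_le_left _ _⟩
  let φ := G.induceHomOfLE (Set.compl_subset_compl.2 hRT)
  have hC := C.ncard_supp_le_ncard_supp_map φ.toHom φ.injective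
  have hk := hcomp (C.map φ.toHom)
  have hTc := C.ncard_supp_induce_le
  have hsum := Set.ncard_add_ncard_compl T
  omega

end VI

open VI SimpleGraph in
theorem statement7 {V : Type*} [Fintype V] (G : SimpleGraph V)
    (u : V) (hu : ∀ v : V, v ≠ u → G.Adj u v) (k : ℕ) :
    (∃ S : Set V, IsConnectedSafeSet G S ∧ S.ncard ≤ k) ↔
      (∃ S : Set V, S.ncard ≤ k ∧
        ∀ C : (G.induce Sᶜ).ConnectedComponent, C.supp.ncard ≤ k) := by
  constructor
  · rintro ⟨S, hS, hSk⟩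
    exact ⟨S, hSk, fun C => (hS.2 C).trans hSk⟩
  · rintro ⟨S, hSk, hcomp⟩
    by_cases huS : u ∈ S
    · exact exists_isConnectedSafeSet_of_mem_of_forall_adj hu huS hSk hcomp
    · have hSc : Sᶜ.ncard ≤ k := by
        have hC := hcomp ((G.induce Sᶜ).connectedComponentMk ⟨u, huS⟩)
        rwa [(induce_connected_of_forall_adj hu huS).supp_eq_univ, Set.ncard_univ,
          Nat.card_coe_set_eq] at hC
      refine exists_isConnectedSafeSet_of_mem_of_forall_adj hu huS hSc fun C => ?_
      exact C.ncard_supp_induce_le.trans (by rwa [compl_compl])
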